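/- arXiv:1605.05693 — 2 statements merged into one kernel-verified Lean document; each statement's English description precedes it below -/
import Mathlib

section
/- (Inequality (b) in the proof of Corollary 3.) Let U, V, X, S, Y, Z be random variables taking values in finite sets on a common probability space, and assume the Markov chain (U,V) → (X,S) → (Y,Z), i.e., (U,V) and (Y,Z) are conditionally independent given (X,S). If in addition I(X; Y | U, S, V) ≥ I(X; Z | U, S, V), then I(V; Y | U, S) - I(V; Z | U, S) ≤ I(X; Y | U, S) - I(X; Z | U, S). -/
open MeasureTheory Real

/-- Shannon entropy of a finitely-valued random variable `X` under measure `μ`. -/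
noncomputable def ent {Ω α : Type*} [MeasurableSpace Ω] [Fintype α]
    (μ : Measure Ω) (X : Ω → α) : ℝ :=
  ∑ x : α, Real.negMulLog (μ (X ⁻¹' {x})).toReal

/-- Conditional Shannon entropy `H(X | Y) = H(X, Y) - H(Y)`. -/
noncomputable def condEnt {Ω α β : Type*} [MeasurableSpace Ω] [Fintype α] [Fintype β]
    (μ : Measure Ω) (X : Ω → α) (Y : Ω → β) : ℝ :=
  ent μ (fun ω => (X ω, Y ω)) - ent μ Y

/-- Mutual information `I(X; Y) = H(X) + H(Y) - H(X, Y)`. -/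
noncomputable def mutInfo {Ω α β : Type*} [MeasurableSpace Ω] [Fintype α] [Fintype β]
    (μ : Measure Ω) (X : Ω → α) (Y : Ω → β) : ℝ :=
  ent μ X + ent μ Y - ent μ (fun ω => (X ω, Y ω))

/-- Conditional mutual information `I(X; Y | Z) = H(X|Z) + H(Y|Z) - H(X,Y|Z)`. -/
noncomputable def condMutInfo {Ω α β γ : Type*} [MeasurableSpace Ω]
    [Fintype α] [Fintype β] [Fintype γ]
    (μ : Measure Ω) (X : Ω → α) (Y : Ω → β) (Z : Ω → γ) : ℝ :=
  condEnt μ X Z + condEnt μ Y Z - condEnt μ (fun ω => (X ω, Y ω)) Z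

/-- `A` and `B` are conditionally independent given `C` (elementary form, for
finitely-valued random variables): the Markov chain `A → C → B`. -/
def CondIndepFin {Ω α β γ : Type*} [MeasurableSpace Ω]
    (μ : MeasureTheory.Measure Ω) (A : Ω → α) (B : Ω → β) (C : Ω → γ) : Prop :=
  ∀ a b c, μ (A ⁻¹' {a} ∩ B ⁻¹' {b} ∩ C ⁻¹' {c}) * μ (C ⁻¹' {c}) =
    μ (A ⁻¹' {a} ∩ C ⁻¹' {c}) * μ (B ⁻¹' {b} ∩ C ⁻¹' {c})

/-!
Writing `W = (U, S)`, both `I(V; Y | W) - I(X; Y | W)` and `I(V; Y | W, X) - I(X; Y | W, V)` equal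
`H(V, W) - H(V, Y, W) - H(X, W) + H(X, Y, W)`, and likewise with `Z` in place of `Y`. The Markov
chain makes `V` and `Y` (and `V` and `Z`) conditionally independent given `(U, X, S)`: forget `Z`
(or `Y`), then move `U` into the condition (weak union). Hence
`I(V; Y | U, S, X) = I(V; Z | U, S, X) = 0`, and the claim becomes the hypothesis
`I(X; Z | U, S, V) ≤ I(X; Y | U, S, V)`.
-/

lemma preimage_pair_singleton {Ω α β : Type*} (A : Ω → α) (B : Ω → β) (a : α) (b : β) :
    (fun ω => (A ω, B ω)) ⁻¹' {(a, b)} = A ⁻¹' {a} ∩ B ⁻¹' {b} := by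
  ext; simp

section Entropy

variable {Ω : Type*} [MeasurableSpace Ω] (μ : Measure Ω)

lemma ent_comp_of_injective {α β : Type*} [Fintype α] [Fintype β] {f : α → β}
    (hf : Function.Injective f) (X : Ω → α) :
    ent μ (fun ω => f (X ω)) = ent μ X := by
  refine (Fintype.sum_of_injective f hf _ _ (fun b hb => ?_) fun a => ?_).symm
  · have hempty : (fun ω => f (X ω)) ⁻¹' {b} = ∅ :=
      Set.eq_empty_of_forall_notMem fun ω h => hb ⟨X ω, h⟩
    simp [hempty]
  · have hfiber : (fun ω => f (X ω)) ⁻¹' {f a} = X ⁻¹' {a} := by ext; simp [hf.eq_iff]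
    simp only [hfiber]

lemma condMutInfo_comp_right_of_injective {α β γ γ' : Type*}
    [Fintype α] [Fintype β] [Fintype γ] [Fintype γ'] {f : γ → γ'} (hf : Function.Injective f)
    (A : Ω → α) (B : Ω → β) (C : Ω → γ) :
    condMutInfo μ A B (fun ω => f (C ω)) = condMutInfo μ A B C := by
  have e₁ := ent_comp_of_injective μ (f := fun p : α × γ => (p.1, f p.2))
    (Function.injective_id.prodMap hf) (fun ω => (A ω, C ω))
  have e₂ := ent_comp_of_injective μ (f := fun p : β × γ => (p.1, f p.2))
    (Function.injective_id.prodMap hf) (fun ω => (B ω, C ω))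
  have e₃ := ent_comp_of_injective μ (f := fun p : (α × β) × γ => (p.1, f p.2))
    (Function.injective_id.prodMap hf) (fun ω => ((A ω, B ω), C ω))
  simp only [condMutInfo, condEnt] at *
  rw [ent_comp_of_injective μ hf, e₁, e₂, e₃]

lemma condMutInfo_sub_condMutInfo {α β γ δ : Type*}
    [Fintype α] [Fintype β] [Fintype γ] [Fintype δ]
    (V : Ω → α) (X : Ω → β) (Y : Ω → γ) (W : Ω → δ) :
    condMutInfo μ V Y W - condMutInfo μ X Y W =
      condMutInfo μ V Y (fun ω => (W ω, X ω)) - condMutInfo μ X Y (fun ω => (W ω, V ω)) := by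
  have e₁ := ent_comp_of_injective μ (f := fun p : δ × α => (p.2, p.1))
    (fun p q h => by simp_all [Prod.ext_iff]) (fun ω => (W ω, V ω))
  have e₂ := ent_comp_of_injective μ (f := fun p : δ × β => (p.2, p.1))
    (fun p q h => by simp_all [Prod.ext_iff]) (fun ω => (W ω, X ω))
  have e₃ := ent_comp_of_injective μ (f := fun p : α × δ × β => (p.2.2, p.2.1, p.1))
    (fun p q h => by simp_all [Prod.ext_iff]) (fun ω => (V ω, W ω, X ω))
  have e₄ := ent_comp_of_injective μ
    (f := fun p : (α × γ) × δ × β => ((p.2.2, p.1.2), p.2.1, p.1.1))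
    (fun p q h => by simp_all [Prod.ext_iff]) (fun ω => ((V ω, Y ω), W ω, X ω))
  have e₅ := ent_comp_of_injective μ (f := fun p : (α × γ) × δ => (p.1.2, p.2, p.1.1))
    (fun p q h => by simp_all [Prod.ext_iff]) (fun ω => ((V ω, Y ω), W ω))
  have e₆ := ent_comp_of_injective μ (f := fun p : (β × γ) × δ => (p.1.2, p.2, p.1.1))
    (fun p q h => by simp_all [Prod.ext_iff]) (fun ω => ((X ω, Y ω), W ω))
  simp only [condMutInfo, condEnt] at *
  linarith

lemma ent_pair_eq_sum {α β : Type*} [Fintype α] [Fintype β] (A : Ω → α) (B : Ω → β) :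
    ent μ (fun ω => (A ω, B ω)) =
      ∑ a, ∑ b, negMulLog (μ (A ⁻¹' {a} ∩ B ⁻¹' {b})).toReal := by
  simp only [ent, Fintype.sum_prod_type, preimage_pair_singleton]

end Entropy

open Finset in
/-- With `p` the joint law of `(A, B, C)`, this is `H(A, C) + H(B, C) = H(A, B, C) + H(C)`. -/
lemma sum_negMulLog_marginals_of_mul_eq {α β γ : Type*} [Fintype α] [Fintype β] [Fintype γ]
    (p : α → β → γ → ℝ) (hp : ∀ a b c, 0 ≤ p a b c)
    (hci : ∀ a b c, p a b c * ∑ a', ∑ b', p a' b' c = (∑ b', p a b' c) * ∑ a', p a' b c) :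
    ∑ a, ∑ c, negMulLog (∑ b, p a b c) + ∑ b, ∑ c, negMulLog (∑ a, p a b c) =
      ∑ a, ∑ b, ∑ c, negMulLog (p a b c) + ∑ c, negMulLog (∑ a, ∑ b, p a b c) := by
  have key a b c : p a b c * (log (∑ b', p a b' c) + log (∑ a', p a' b c)) =
      p a b c * (log (p a b c) + log (∑ a', ∑ b', p a' b' c)) := by
    rcases (hp a b c).eq_or_lt with h0 | hpos
    · simp [← h0]
    have hAC : p a b c ≤ ∑ b', p a b' c := single_le_sum (fun b _ => hp a b c) (mem_univ b)
    have hBC : p a b c ≤ ∑ a', p a' b c := single_le_sum (fun a _ => hp a b c) (mem_univ a)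
    have hC : ∑ b', p a b' c ≤ ∑ a', ∑ b', p a' b' c :=
      single_le_sum (f := fun a => ∑ b', p a b' c) (fun a _ => sum_nonneg fun b _ => hp a b c)
        (mem_univ a)
    rw [← log_mul (hpos.trans_le hAC).ne' (hpos.trans_le hBC).ne',
      ← log_mul hpos.ne' (hpos.trans_le (hAC.trans hC)).ne', hci]
  have eAC : ∑ a, ∑ c, negMulLog (∑ b, p a b c) =
      -∑ a, ∑ b, ∑ c, p a b c * log (∑ b', p a b' c) := by
    simp only [negMulLog, neg_mul, sum_neg_distrib, sum_mul]
    exact congrArg _ (sum_congr rfl fun a _ => sum_comm)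
  have eBC : ∑ b, ∑ c, negMulLog (∑ a, p a b c) =
      -∑ a, ∑ b, ∑ c, p a b c * log (∑ a', p a' b c) := by
    simp only [negMulLog, neg_mul, sum_neg_distrib, sum_mul]
    exact congrArg _ ((sum_congr rfl fun b _ => sum_comm).trans sum_comm)
  have eC : ∑ c, negMulLog (∑ a, ∑ b, p a b c) =
      -∑ a, ∑ b, ∑ c, p a b c * log (∑ a', ∑ b', p a' b' c) := by
    simp only [negMulLog, neg_mul, sum_neg_distrib, sum_mul]
    exact congrArg _ (sum_comm.trans (sum_congr rfl fun a _ => sum_comm))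
  have eABC : ∑ a, ∑ b, ∑ c, negMulLog (p a b c) =
      -∑ a, ∑ b, ∑ c, p a b c * log (p a b c) := by
    simp only [negMulLog, neg_mul, sum_neg_distrib]
  have hsum : ∑ a, ∑ b, ∑ c, p a b c * (log (∑ b', p a b' c) + log (∑ a', p a' b c)) =
      ∑ a, ∑ b, ∑ c, p a b c * (log (p a b c) + log (∑ a', ∑ b', p a' b' c)) := by
    simp only [key]
  simp only [mul_add, sum_add_distrib] at hsum
  rw [eAC, eBC, eC, eABC]
  linarith

section CondIndep

variable {Ω α β γ : Type*} [MeasurableSpace Ω] {μ : Measure Ω}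
  {A : Ω → α} {B : Ω → β} {C : Ω → γ}

lemma measure_inter_preimage_eq_sum [MeasurableSpace β] [MeasurableSingletonClass β]
    (hB : Measurable B) (t : Set Ω) (s : Finset β) :
    μ (t ∩ B ⁻¹' s) = ∑ b ∈ s, μ (t ∩ B ⁻¹' {b}) := by
  have hfib b : μ (t ∩ B ⁻¹' {b}) = μ.restrict t (B ⁻¹' {b}) := by
    rw [Measure.restrict_apply (hB (measurableSet_singleton b)), Set.inter_comm]
  rw [Finset.sum_congr rfl fun b _ => hfib b,
    sum_measure_preimage_singleton s fun b _ => hB (measurableSet_singleton b),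
    Measure.restrict_apply (hB s.measurableSet), Set.inter_comm]

lemma measure_eq_sum_inter_preimage [Fintype β] [MeasurableSpace β] [MeasurableSingletonClass β]
    (hB : Measurable B) (t : Set Ω) :
    μ t = ∑ b, μ (t ∩ B ⁻¹' {b}) := by
  simpa using measure_inter_preimage_eq_sum (μ := μ) hB t Finset.univ

lemma CondIndepFin.symm (h : CondIndepFin μ A B C) : CondIndepFin μ B A C := fun b a c => by
  rw [Set.inter_comm (B ⁻¹' {b}), mul_comm (μ (B ⁻¹' {b} ∩ C ⁻¹' {c}))]
  exact h a b c

lemma CondIndepFin.comp_right {β' : Type*} [Fintype β] [MeasurableSpace β]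
    [MeasurableSingletonClass β] (h : CondIndepFin μ A B C) (hB : Measurable B) (f : β → β') :
    CondIndepFin μ A (fun ω => f (B ω)) C := by
  classical
  intro a b' c
  have hfib : (fun ω => f (B ω)) ⁻¹' {b'} = B ⁻¹' ↑(Finset.univ.filter (f · = b')) := by
    ext; simp
  rw [hfib, Set.inter_right_comm (A ⁻¹' {a}), Set.inter_comm (B ⁻¹' _),
    measure_inter_preimage_eq_sum hB, measure_inter_preimage_eq_sum hB,
    Finset.sum_mul, Finset.mul_sum]
  refine Finset.sum_congr rfl fun b _ => ?_
  rw [Set.inter_right_comm (A ⁻¹' {a}), Set.inter_comm (C ⁻¹' {c})]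
  exact h a b c

lemma CondIndepFin.comp_left {α' : Type*} [Fintype α] [MeasurableSpace α]
    [MeasurableSingletonClass α] (h : CondIndepFin μ A B C) (hA : Measurable A) (f : α → α') :
    CondIndepFin μ (fun ω => f (A ω)) B C :=
  (h.symm.comp_right hA f).symm

lemma CondIndepFin.weak_union {υ : Type*} [Fintype υ] [MeasurableSpace υ]
    [MeasurableSingletonClass υ] [Fintype α] [MeasurableSpace α] [MeasurableSingletonClass α]
    [IsFiniteMeasure μ] {U : Ω → υ} (h : CondIndepFin μ (fun ω => (U ω, A ω)) B C)
    (hU : Measurable U) (hA : Measurable A) :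
    CondIndepFin μ A B (fun ω => (U ω, C ω)) := by
  rintro a b ⟨u, c⟩
  rw [preimage_pair_singleton]
  set D := U ⁻¹' {u} ∩ C ⁻¹' {c}
  have h₁ : μ (A ⁻¹' {a} ∩ B ⁻¹' {b} ∩ D) * μ (C ⁻¹' {c}) =
      μ (A ⁻¹' {a} ∩ D) * μ (B ⁻¹' {b} ∩ C ⁻¹' {c}) := by
    convert h (u, a) b c using 3 <;> rw [preimage_pair_singleton] <;> ext <;> simp [D] <;> tauto
  have h₂ : μ (B ⁻¹' {b} ∩ D) * μ (C ⁻¹' {c}) = μ D * μ (B ⁻¹' {b} ∩ C ⁻¹' {c}) := by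
    convert (h.comp_left (hU.prodMk hA) Prod.fst) u b c using 3
    ext; simp [D]; tauto
  by_cases hC : μ (C ⁻¹' {c}) = 0
  · have hD : μ D = 0 := measure_mono_null Set.inter_subset_right hC
    have hnull (s : Set Ω) : μ (s ∩ D) = 0 := measure_mono_null Set.inter_subset_right hD
    simp only [hnull, zero_mul]
  rw [← ENNReal.mul_left_inj hC (measure_ne_top _ _)]
  calc μ (A ⁻¹' {a} ∩ B ⁻¹' {b} ∩ D) * μ D * μ (C ⁻¹' {c})
      = μ (A ⁻¹' {a} ∩ D) * (μ D * μ (B ⁻¹' {b} ∩ C ⁻¹' {c})) := by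
        rw [mul_right_comm, h₁]; ring
    _ = μ (A ⁻¹' {a} ∩ D) * μ (B ⁻¹' {b} ∩ D) * μ (C ⁻¹' {c}) := by rw [← h₂]; ring

lemma condMutInfo_eq_zero_of_condIndepFin [IsFiniteMeasure μ]
    [Fintype α] [MeasurableSpace α] [MeasurableSingletonClass α]
    [Fintype β] [MeasurableSpace β] [MeasurableSingletonClass β] [Fintype γ]
    (h : CondIndepFin μ A B C) (hA : Measurable A) (hB : Measurable B) :
    condMutInfo μ A B C = 0 := by
  set p : α → β → γ → ℝ := fun a b c => (μ (A ⁻¹' {a} ∩ B ⁻¹' {b} ∩ C ⁻¹' {c})).toReal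
  have hAC a c : (μ (A ⁻¹' {a} ∩ C ⁻¹' {c})).toReal = ∑ b, p a b c := by
    rw [measure_eq_sum_inter_preimage hB, ENNReal.toReal_sum fun _ _ => measure_ne_top _ _]
    simp only [p, Set.inter_right_comm (A ⁻¹' {a})]
  have hBC b c : (μ (B ⁻¹' {b} ∩ C ⁻¹' {c})).toReal = ∑ a, p a b c := by
    rw [measure_eq_sum_inter_preimage hA, ENNReal.toReal_sum fun _ _ => measure_ne_top _ _]
    simp only [p, Set.inter_comm _ (A ⁻¹' _), Set.inter_assoc]
  have hC c : (μ (C ⁻¹' {c})).toReal = ∑ a, ∑ b, p a b c := by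
    rw [measure_eq_sum_inter_preimage hA, ENNReal.toReal_sum fun _ _ => measure_ne_top _ _]
    simp only [Set.inter_comm (C ⁻¹' _), hAC]
  have hABC : ent μ (fun ω => ((A ω, B ω), C ω)) = ∑ a, ∑ b, ∑ c, negMulLog (p a b c) := by
    simp only [ent_pair_eq_sum, Fintype.sum_prod_type, preimage_pair_singleton, p]
  have hci a b c : p a b c * ∑ a', ∑ b', p a' b' c = (∑ b', p a b' c) * ∑ a', p a' b c := by
    rw [← hAC, ← hBC, ← hC, ← ENNReal.toReal_mul, ← ENNReal.toReal_mul, h a b c]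
  have hent := sum_negMulLog_marginals_of_mul_eq p (fun _ _ _ => ENNReal.toReal_nonneg) hci
  simp only [condMutInfo, condEnt, ent_pair_eq_sum, hABC, hAC, hBC]
  simp only [ent, hC]
  linarith

end CondIndep

theorem corollary3_inequality_b_general
    {Ω 𝒰 𝒱 𝒳 σ 𝒴 𝒵 : Type*} [MeasurableSpace Ω]
    [Fintype 𝒰] [Fintype 𝒱] [Fintype 𝒳] [Fintype σ] [Fintype 𝒴] [Fintype 𝒵]
    [MeasurableSpace 𝒰] [MeasurableSingletonClass 𝒰]
    [MeasurableSpace 𝒱] [MeasurableSingletonClass 𝒱]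
    [MeasurableSpace 𝒴] [MeasurableSingletonClass 𝒴]
    [MeasurableSpace 𝒵] [MeasurableSingletonClass 𝒵]
    (μ : Measure Ω) [IsProbabilityMeasure μ]
    (U : Ω → 𝒰) (V : Ω → 𝒱) (X : Ω → 𝒳) (S : Ω → σ) (Y : Ω → 𝒴) (Z : Ω → 𝒵)
    (hU : Measurable U) (hV : Measurable V)
    (hY : Measurable Y) (hZ : Measurable Z)
    (hMarkov : CondIndepFin μ (fun ω => (U ω, V ω)) (fun ω => (Y ω, Z ω))
      (fun ω => (X ω, S ω)))
    (hcap : condMutInfo μ X Z (fun ω => (U ω, S ω, V ω))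
      ≤ condMutInfo μ X Y (fun ω => (U ω, S ω, V ω)))
    :
    condMutInfo μ V Y (fun ω => (U ω, S ω)) - condMutInfo μ V Z (fun ω => (U ω, S ω))
    ≤ condMutInfo μ X Y (fun ω => (U ω, S ω))
      - condMutInfo μ X Z (fun ω => (U ω, S ω)) := by
  have hYZ := hY.prodMk hZ
  have hVY := condMutInfo_eq_zero_of_condIndepFin
    ((hMarkov.comp_right hYZ Prod.fst).weak_union hU hV) hV hY
  have hVZ := condMutInfo_eq_zero_of_condIndepFin
    ((hMarkov.comp_right hYZ Prod.snd).weak_union hU hV) hV hZ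
  have hreorder : Function.Injective fun p : (𝒰 × σ) × 𝒳 => (p.1.1, p.2, p.1.2) :=
    fun p q h => by simp_all [Prod.ext_iff]
  have hassoc : Function.Injective fun p : (𝒰 × σ) × 𝒱 => (p.1.1, p.1.2, p.2) :=
    (Equiv.prodAssoc 𝒰 σ 𝒱).injective
  have chainY := condMutInfo_sub_condMutInfo μ V X Y (fun ω => (U ω, S ω))
  have chainZ := condMutInfo_sub_condMutInfo μ V X Z (fun ω => (U ω, S ω))
  rw [← condMutInfo_comp_right_of_injective μ hreorder] at chainY chainZ
  rw [← condMutInfo_comp_right_of_injective μ hassoc] at chainY chainZ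
  linarith

theorem corollary3_inequality_b
    {Ω 𝒰 𝒱 𝒳 σ 𝒴 𝒵 : Type*} [MeasurableSpace Ω]
    [Fintype 𝒰] [Fintype 𝒱] [Fintype 𝒳] [Fintype σ] [Fintype 𝒴] [Fintype 𝒵]
    [MeasurableSpace 𝒰] [MeasurableSingletonClass 𝒰]
    [MeasurableSpace 𝒱] [MeasurableSingletonClass 𝒱]
    [MeasurableSpace 𝒳] [MeasurableSingletonClass 𝒳]
    [MeasurableSpace σ] [MeasurableSingletonClass σ]
    [MeasurableSpace 𝒴] [MeasurableSingletonClass 𝒴]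
    [MeasurableSpace 𝒵] [MeasurableSingletonClass 𝒵]
    (μ : Measure Ω) [IsProbabilityMeasure μ]
    (U : Ω → 𝒰) (V : Ω → 𝒱) (X : Ω → 𝒳) (S : Ω → σ) (Y : Ω → 𝒴) (Z : Ω → 𝒵)
    (hU : Measurable U) (hV : Measurable V) (hX : Measurable X)
    (hS : Measurable S) (hY : Measurable Y) (hZ : Measurable Z)
    (hMarkov : CondIndepFin μ (fun ω => (U ω, V ω)) (fun ω => (Y ω, Z ω))
      (fun ω => (X ω, S ω)))
    (hcap : condMutInfo μ X Z (fun ω => (U ω, S ω, V ω))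
      ≤ condMutInfo μ X Y (fun ω => (U ω, S ω, V ω)))
    :
    condMutInfo μ V Y (fun ω => (U ω, S ω)) - condMutInfo μ V Z (fun ω => (U ω, S ω))
    ≤ condMutInfo μ X Y (fun ω => (U ω, S ω))
      - condMutInfo μ X Z (fun ω => (U ω, S ω)) :=
  corollary3_inequality_b_general μ U V X S Y Z hU hV hY hZ hMarkov hcap
end

section
/- (Maximization step in the proof of Theorem 4.) Let 0 ≤ N1 ≤ N2 ≤ 1/2. Then the supremum over P ∈ [0,1] of the quantity h(N2) - h(N1) - [ h(P*N2) - h(P*N1) ] equals h(N2) - h(N1), and it is attained at P = 1/2 (since (1/2)*u = 1/2 for every u ∈ [0,1], so that h((1/2)*N2) - h((1/2)*N1) = 0). Here h is the binary entropy function and P*u = P(1-u) + (1-P)u. -/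
/-- The binary entropy function `h(p) = -p log p - (1-p) log (1-p)`,
with the convention `h(0) = h(1) = 0`. -/
noncomputable def binEnt (p : ℝ) : ℝ := Real.negMulLog p + Real.negMulLog (1 - p)

/-- For `P, u ∈ [0,1]`, the binary convolution `P * u = P(1-u) + (1-P)u`. -/
def binConv (P u : ℝ) : ℝ := P * (1 - u) + (1 - P) * u

lemma binEnt_eq (p : ℝ) : binEnt p = Real.binEntropy p := by
  rw [Real.binEntropy_eq_negMulLog_add_negMulLog_one_sub]; rfl

lemma binConv_one_sub (P u : ℝ) : binConv (1 - P) u = 1 - binConv P u := by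
  unfold binConv; ring

lemma aux_le {N1 N2 P : ℝ} (h0 : 0 ≤ N1) (h12 : N1 ≤ N2) (h2 : N2 ≤ 1/2)
    (hP0 : 0 ≤ P) (hP1 : P ≤ 1/2) :
    binEnt (binConv P N1) ≤ binEnt (binConv P N2) := by
  rw [binEnt_eq, binEnt_eq]
  apply Real.binEntropy_strictMonoOn.monotoneOn
  · constructor
    · unfold binConv; nlinarith
    · unfold binConv; rw [show (2:ℝ)⁻¹ = 1/2 by norm_num]; nlinarith
  · constructor
    · unfold binConv; nlinarith
    · unfold binConv; rw [show (2:ℝ)⁻¹ = 1/2 by norm_num]; nlinarith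
  · unfold binConv; nlinarith

lemma aux_le' {N1 N2 P : ℝ} (h0 : 0 ≤ N1) (h12 : N1 ≤ N2) (h2 : N2 ≤ 1/2)
    (hP0 : 0 ≤ P) (hP1 : P ≤ 1) :
    binEnt (binConv P N1) ≤ binEnt (binConv P N2) := by
  rcases le_or_gt P (1/2) with hP | hP
  · exact aux_le h0 h12 h2 hP0 hP
  · have h := aux_le (P := 1 - P) h0 h12 h2 (by linarith) (by linarith)
    rw [binConv_one_sub, binConv_one_sub, binEnt_eq, binEnt_eq,
      Real.binEntropy_one_sub, Real.binEntropy_one_sub, ← binEnt_eq, ← binEnt_eq] at h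
    exact h

/-- **Maximization step in the proof of Theorem 4:**
for `0 ≤ N1 ≤ N2 ≤ 1/2`, the supremum over `P ∈ [0,1]` of
`h(N2) - h(N1) - [h(P*N2) - h(P*N1)]` equals `h(N2) - h(N1)`, attained at
`P = 1/2` (since `(1/2)*u = 1/2` so the bracket vanishes there). -/
theorem binary_sdwc_maximization
    {N1 N2 : ℝ} (h0 : 0 ≤ N1) (h12 : N1 ≤ N2) (h2 : N2 ≤ 1/2) :
    IsGreatest
      ((fun P => binEnt N2 - binEnt N1
          - (binEnt (binConv P N2) - binEnt (binConv P N1))) '' Set.Icc (0:ℝ) 1)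
      (binEnt N2 - binEnt N1)
    ∧ (∀ u ∈ Set.Icc (0:ℝ) 1, binConv (1/2) u = 1/2)
    ∧ binEnt (binConv (1/2) N2) - binEnt (binConv (1/2) N1) = 0
    ∧ binEnt N2 - binEnt N1
        - (binEnt (binConv (1/2) N2) - binEnt (binConv (1/2) N1))
      = binEnt N2 - binEnt N1 := by
  have hconv : ∀ u : ℝ, binConv (1/2) u = 1/2 := by intro u; unfold binConv; ring
  have e0 : binEnt (binConv (1/2) N2) - binEnt (binConv (1/2) N1) = 0 := by
    rw [hconv N2, hconv N1]; ring
  refine ⟨⟨⟨1/2, by norm_num, by simp only [e0, sub_zero]⟩, ?_⟩, fun u _ => hconv u,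
    e0, by rw [e0]; ring⟩
  rintro x ⟨P, hP, rfl⟩
  simp only
  have := aux_le' h0 h12 h2 hP.1 hP.2
  linarith
end
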